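/- arXiv:2109.09836 — 4 statements merged into one kernel-verified Lean document; each statement's English description precedes it below -/
import Mathlib

section
/- Let Q : A ⥤ B be a lax epimorphism between small categories and M : C ⥤ D a discrete splitting bifibration. Then for all functors G : A ⥤ C and H : B ⥤ D with Q ⋙ H = G ⋙ M, there exists a unique functor T : B ⥤ C such that Q ⋙ T = G and T ⋙ M = H. -/
open CategoryTheory

universe u

namespace CategoryTheory

variable {E B : Type u} [Category.{u} E] [Category.{u} B]

/-- Objects of the factorization category `g ↓↓ P`: factorizations `b ⟶ P e ⟶ c` of `g`. -/
structure FactObj (P : E ⥤ B) {b c : B} (g : b ⟶ c) where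
  pt : E
  h : b ⟶ P.obj pt
  k : P.obj pt ⟶ c
  fac : h ≫ k = g

/-- The factorization category `g ↓↓ P`. -/
instance FactObj.category (P : E ⥤ B) {b c : B} (g : b ⟶ c) : Category (FactObj P g) where
  Hom x y := { u : x.pt ⟶ y.pt // x.h ≫ P.map u = y.h ∧ P.map u ≫ y.k = x.k }
  id x := ⟨𝟙 x.pt, by simp, by simp⟩
  comp {x y z} u v := ⟨u.1 ≫ v.1,
    by rw [Functor.map_comp, ← Category.assoc, u.2.1, v.2.1],
    by rw [Functor.map_comp, Category.assoc, v.2.2, u.2.2]⟩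
  id_comp f := Subtype.ext (by simp)
  comp_id f := Subtype.ext (by simp)
  assoc f g h := Subtype.ext (by simp)

/-- A `P`-split of `b`: a factorization `b ⟶ P e ⟶ b` of the identity such that
`(e, 𝟙, h ∘ k)` and `(e, h ∘ k, 𝟙)` are connected in the factorization category
`(h ∘ k) ↓↓ P`. -/
def IsPSplit (P : E ⥤ B) {b : B} (e : E) (h : b ⟶ P.obj e) (k : P.obj e ⟶ b) : Prop :=
  h ≫ k = 𝟙 b ∧
    Zigzag (J := FactObj P (k ≫ h))
      ⟨e, 𝟙 (P.obj e), k ≫ h, Category.id_comp _⟩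
      ⟨e, k ≫ h, 𝟙 (P.obj e), Category.comp_id _⟩

/-- A lift of a `P`-split diagram, as in the definition of a discrete splitting
bifibration. -/
structure SplitLift (P : E ⥤ B) {b c : B} (g : b ⟶ c) {e e' : E}
    (h : b ⟶ P.obj e) (k : P.obj e ⟶ b) (h' : c ⟶ P.obj e') (k' : P.obj e' ⟶ c) where
  b₀ : E
  c₀ : E
  h₀ : b₀ ⟶ e
  k₀ : e ⟶ b₀
  g₀ : b₀ ⟶ c₀
  h₀' : c₀ ⟶ e'
  k₀' : e' ⟶ c₀
  hb : P.obj b₀ = b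
  hc : P.obj c₀ = c
  map_h₀ : P.map h₀ = eqToHom hb ≫ h
  map_k₀ : P.map k₀ = k ≫ eqToHom hb.symm
  map_g₀ : P.map g₀ = eqToHom hb ≫ g ≫ eqToHom hc.symm
  map_h₀' : P.map h₀' = eqToHom hc ≫ h'
  map_k₀' : P.map k₀' = k' ≫ eqToHom hc.symm
  comm : h₀ ≫ k₀ ≫ g₀ = g₀ ≫ h₀' ≫ k₀'

/-- A functor `P : E ⥤ B` is a *discrete splitting bifibration* if every `P`-split diagram
(a morphism `g : b ⟶ c`, a `P`-split of `b` and a `P`-split of `c`, suitably connected in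
`g ↓↓ P`) admits a unique lift. -/
def IsDSB (P : E ⥤ B) : Prop :=
  ∀ {b c : B} (g : b ⟶ c) {e e' : E} (h : b ⟶ P.obj e) (k : P.obj e ⟶ b)
    (h' : c ⟶ P.obj e') (k' : P.obj e' ⟶ c)
    (hsp : IsPSplit P e h k) (hsp' : IsPSplit P e' h' k'),
    Zigzag (J := FactObj P g)
      ⟨e, h, k ≫ g, by rw [← Category.assoc, hsp.1, Category.id_comp]⟩
      ⟨e', g ≫ h', k', by rw [Category.assoc, hsp'.1, Category.comp_id]⟩ →
    ∃ L : SplitLift P g h k h' k', ∀ L' : SplitLift P g h k h' k', L' = L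

end CategoryTheory

namespace CategoryTheory

/-- A functor `J : A ⥤ B` between small categories is a *lax epimorphism* (in the 2-category
`Cat` of small categories) if for every category `C`, the precomposition functor
`(B ⥤ C) ⥤ (A ⥤ C)` given by whiskering on the left with `J` is full and faithful. -/
def Functor.IsLaxEpi {A B : Type u} [Category.{u} A] [Category.{u} B] (J : A ⥤ B) : Prop :=
  ∀ (C : Type u) [Category.{u} C],
    (((whiskeringLeft A B C).obj J).Full ∧ ((whiskeringLeft A B C).obj J).Faithful)

end CategoryTheory

/-!
Since `Q` is a lax epimorphism, every factorization category `f ↓↓ Q` is connected: full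
faithfulness of `Q ⋙ -` on the functors `B(b, -)` and "connected components of factorizations
`b ⟶ Q a ⟶ -`" yields a natural section of the composition map that picks out one component.
Choosing a factorization `b ⟶ Q a ⟶ b` of each identity and applying `H`, the square turns it
into an `M`-split of `H b`, and connectedness makes the image of every `g : b ⟶ c` an `M`-split
diagram. The diagonal sends `g` to the middle morphism of the unique lift of that diagram.
Functoriality, both triangles and uniqueness of the diagonal all come from uniqueness of lifts;
for the upper triangle one compares the chosen split of `Q a` with the split `Q a = Q a = Q a`,
whose only lift is `G a` itself.
-/

namespace CategoryTheory

section LaxEpi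

variable {A B : Type u} [Category.{u} A] [Category.{u} B] {J : A ⥤ B}

open InducedCategory in
theorem Functor.IsLaxEpi.whiskerLeft_bijective (hJ : J.IsLaxEpi) {D : Type*} [Category.{u} D]
    (F₁ F₂ : B ⥤ D) : Function.Bijective (fun τ : F₁ ⟶ F₂ => Functor.whiskerLeft J τ) := by
  -- `D` need not be small: test against its full subcategory on the objects of `F₁` and `F₂`.
  let K : B ⊕ B → D := Sum.elim F₁.obj F₂.obj
  let F₁' : B ⥤ InducedCategory D K :=
    { obj := Sum.inl, map := fun f => homMk (F₁.map f) }
  let F₂' : B ⥤ InducedCategory D K :=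
    { obj := Sum.inr, map := fun f => homMk (F₂.map f) }
  let toInduced : (F₁ ⟶ F₂) → (F₁' ⟶ F₂') := fun τ =>
    { app := fun x => homMk (τ.app x), naturality := fun _ _ f => hom_ext (τ.naturality f) }
  obtain ⟨hfull, hfaith⟩ := hJ (InducedCategory D K)
  refine ⟨fun τ τ' hττ' => ?_, fun ψ => ?_⟩
  · have := ((whiskeringLeft A B _).obj J).map_injective (X := F₁') (Y := F₂')
      (a₁ := toInduced τ) (a₂ := toInduced τ') (by ext a; exact NatTrans.congr_app hττ' a)
    ext x
    exact congrArg (fun θ => (θ.app x).hom) this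
  · let ψ' : J ⋙ F₁' ⟶ J ⋙ F₂' :=
      { app := fun a => homMk (ψ.app a), naturality := fun _ _ f => hom_ext (ψ.naturality f) }
    obtain ⟨σ, hσ⟩ := ((whiskeringLeft A B _).obj J).map_surjective ψ'
    refine ⟨{ app := fun x => (σ.app x).hom
              naturality := fun _ _ f => congrArg Hom.hom (σ.naturality f) }, ?_⟩
    ext a
    exact congrArg (fun θ => (θ.app a).hom) hσ

/-- Like `FactObj Q f`, but without fixing the composite `f`. -/
structure FactorThrough (Q : A ⥤ B) (b x : B) : Type u where
  pt : A
  h : b ⟶ Q.obj pt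
  k : Q.obj pt ⟶ x

namespace FactorThrough

variable {Q : A ⥤ B} {b x : B}

def Rel (p q : FactorThrough Q b x) : Prop :=
  ∃ w : p.pt ⟶ q.pt, p.h ≫ Q.map w = q.h ∧ Q.map w ≫ q.k = p.k

theorem comp_eq_of_eqvGen {p q : FactorThrough Q b x} (hpq : Relation.EqvGen Rel p q) :
    p.h ≫ p.k = q.h ≫ q.k := by
  induction hpq with
  | rel _ _ h =>
    obtain ⟨w, hh, hk⟩ := h
    rw [← hh, ← hk, Category.assoc]
  | refl => rfl
  | symm _ _ _ ih => exact ih.symm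
  | trans _ _ _ _ _ ih₁ ih₂ => exact ih₁.trans ih₂

theorem zigzag_of_eqvGen {f : b ⟶ x} {p q : FactorThrough Q b x}
    (hpq : Relation.EqvGen Rel p q) (hp : p.h ≫ p.k = f) (hq : q.h ≫ q.k = f) :
    Zigzag (⟨p.pt, p.h, p.k, hp⟩ : FactObj Q f) ⟨q.pt, q.h, q.k, hq⟩ := by
  induction hpq with
  | rel _ _ h =>
    obtain ⟨w, hh, hk⟩ := h
    exact Zigzag.of_hom ⟨w, hh, hk⟩
  | refl => rfl
  | symm _ _ _ ih => exact (ih hq hp).symm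
  | trans _ q _ hpq _ ih₁ ih₂ =>
    have hq' : q.h ≫ q.k = f := (comp_eq_of_eqvGen hpq).symm.trans hp
    exact (ih₁ hp hq').trans (ih₂ hq' hq)

variable (Q b)

/-- The connected components of all factorizations `b ⟶ Q a ⟶ x`. -/
def components : B ⥤ Type u where
  obj x := Quot (Rel (Q := Q) (b := b) (x := x))
  map f := ↾Quot.map (fun p => ⟨p.pt, p.h, p.k ≫ f⟩) fun _ _ ⟨w, hh, hk⟩ =>
    ⟨w, hh, by rw [← Category.assoc, hk]⟩
  map_id x := by
    ext p
    induction p using Quot.ind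
    simp [Quot.map]
  map_comp f g := by
    ext p
    induction p using Quot.ind
    simp [Quot.map]

def compose : components Q b ⟶ coyoneda.obj (Opposite.op b) where
  app x := ↾Quot.lift (fun p => p.h ≫ p.k) fun _ _ h => comp_eq_of_eqvGen (.rel _ _ h)
  naturality x y f := by
    ext p
    induction p using Quot.ind
    exact (Category.assoc _ _ _).symm

def mkId : Q ⋙ coyoneda.obj (Opposite.op b) ⟶ Q ⋙ components Q b where
  app a := ↾fun u => Quot.mk _ ⟨a, u, 𝟙 (Q.obj a)⟩
  naturality a a' w := by
    ext u
    exact (Quot.sound ⟨w, rfl, by simp⟩).symm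

end FactorThrough

open FactorThrough in
theorem Functor.IsLaxEpi.isConnected_factObj (hJ : J.IsLaxEpi) {b x : B} (f : b ⟶ x) :
    IsConnected (FactObj J f) := by
  -- `τ` is a section of `compose` since it is one after whiskering; by naturality it sends `f`
  -- to the component of every factorization of `f`.
  obtain ⟨τ, hτ⟩ := (hJ.whiskerLeft_bijective _ _).2 (mkId J b)
  have hτ_mkId (a : A) (u : b ⟶ J.obj a) : τ.app (J.obj a) u = Quot.mk _ ⟨a, u, 𝟙 _⟩ :=
    types_congr_hom (NatTrans.congr_app hτ a) u
  have hτσ : τ ≫ compose J b = 𝟙 _ := (hJ.whiskerLeft_bijective _ _).1 <| by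
    ext a u
    change (compose J b).app _ (τ.app _ u) = u
    rw [hτ_mkId]
    exact Category.comp_id u
  have hτ_eq (p : FactorThrough J b x) : τ.app x (p.h ≫ p.k) = Quot.mk _ p := by
    have := types_congr_hom (τ.naturality p.k) p.h
    rw [types_comp_apply, types_comp_apply, hτ_mkId] at this
    exact this.trans (congrArg (Quot.mk _) (by simp))
  obtain ⟨p, hp⟩ := Quot.exists_rep (τ.app x f)
  have hpf : p.h ≫ p.k = f := by
    have := types_congr_hom (NatTrans.congr_app hτσ x) f
    rw [NatTrans.comp_app, types_comp_apply, ← hp] at this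
    exact this
  have : Nonempty (FactObj J f) := ⟨⟨p.pt, p.h, p.k, hpf⟩⟩
  refine zigzag_isConnected fun p q => ?_
  have hpq : Quot.mk Rel (⟨p.pt, p.h, p.k⟩ : FactorThrough J b x) =
      Quot.mk Rel ⟨q.pt, q.h, q.k⟩ := by
    rw [← hτ_eq, ← hτ_eq, p.fac, q.fac]
  exact zigzag_of_eqvGen (Quot.eq.mp hpq) p.fac q.fac

end LaxEpi

theorem FactObj.mk_eq_mk {E B : Type u} [Category.{u} E] [Category.{u} B] {P : E ⥤ B}
    {b c : B} {g : b ⟶ c} {pt : E} {h h' : b ⟶ P.obj pt} {k k' : P.obj pt ⟶ c}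
    (hh : h = h') (hk : k = k') {fac : h ≫ k = g} {fac' : h' ≫ k' = g} :
    (⟨pt, h, k, fac⟩ : FactObj P g) = ⟨pt, h', k', fac'⟩ := by
  subst hh hk
  rfl

namespace SplitLift

variable {E B : Type u} [Category.{u} E] [Category.{u} B] {P : E ⥤ B} {b c d : B}
  {e e' e'' : E} {g : b ⟶ c} {h : b ⟶ P.obj e} {k : P.obj e ⟶ b}
  {h' : c ⟶ P.obj e'} {k' : P.obj e' ⟶ c} {h'' : d ⟶ P.obj e''} {k'' : P.obj e'' ⟶ d}

section Congr

variable {L L' : SplitLift P g h k h' k'} (w : L = L')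
include w

theorem congr_b₀ : L.b₀ = L'.b₀ := by subst w; rfl

theorem congr_c₀ : L.c₀ = L'.c₀ := by subst w; rfl

theorem congr_h₀ : L.h₀ = eqToHom (congr_b₀ w) ≫ L'.h₀ := by subst w; simp

theorem congr_k₀ : L.k₀ = L'.k₀ ≫ eqToHom (congr_b₀ w).symm := by subst w; simp

theorem congr_g₀ : L.g₀ = eqToHom (congr_b₀ w) ≫ L'.g₀ ≫ eqToHom (congr_c₀ w).symm := by
  subst w; simp

theorem heq_g₀ : L.g₀ ≍ L'.g₀ := by subst w; rfl

end Congr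

/-- A lift of the diagram of an identity only needs a lift of the split: `comm` is automatic. -/
abbrev ofSplit {g : b ⟶ b} (hg : g = 𝟙 b) (b₀ : E) (h₀ : b₀ ⟶ e) (k₀ : e ⟶ b₀)
    (hb : P.obj b₀ = b) (map_h₀ : P.map h₀ = eqToHom hb ≫ h)
    (map_k₀ : P.map k₀ = k ≫ eqToHom hb.symm) : SplitLift P g h k h k where
  b₀ := b₀
  c₀ := b₀
  h₀ := h₀
  k₀ := k₀
  g₀ := 𝟙 b₀
  h₀' := h₀
  k₀' := k₀
  hb := hb
  hc := hb
  map_h₀ := map_h₀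
  map_k₀ := map_k₀
  map_g₀ := by simp [hg]
  map_h₀' := map_h₀
  map_k₀' := map_k₀
  comm := by simp

abbrev sourceId (L : SplitLift P g h k h' k') : SplitLift P (𝟙 b) h k h k :=
  ofSplit rfl L.b₀ L.h₀ L.k₀ L.hb L.map_h₀ L.map_k₀

abbrev targetId (L : SplitLift P g h k h' k') : SplitLift P (𝟙 c) h' k' h' k' :=
  ofSplit rfl L.c₀ L.h₀' L.k₀' L.hc L.map_h₀' L.map_k₀'

section Consecutive

variable {f : c ⟶ d} {L₁ : SplitLift P g h k h' k'} {L₂ : SplitLift P f h' k' h'' k''}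
  (hmid : L₁.targetId = L₂.sourceId)
include hmid

theorem c₀_eq_b₀ : L₁.c₀ = L₂.b₀ := congr_b₀ hmid

theorem h₀'_eq_h₀ : L₁.h₀' = eqToHom (c₀_eq_b₀ hmid) ≫ L₂.h₀ := congr_h₀ hmid

theorem k₀'_eq_k₀ : L₁.k₀' = L₂.k₀ ≫ eqToHom (c₀_eq_b₀ hmid).symm := congr_k₀ hmid

abbrev comp {gf : b ⟶ d} (hgf : g ≫ f = gf) : SplitLift P gf h k h'' k'' where
  b₀ := L₁.b₀
  c₀ := L₂.c₀
  h₀ := L₁.h₀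
  k₀ := L₁.k₀
  g₀ := L₁.g₀ ≫ eqToHom (c₀_eq_b₀ hmid) ≫ L₂.g₀
  h₀' := L₂.h₀'
  k₀' := L₂.k₀'
  hb := L₁.hb
  hc := L₂.hc
  map_h₀ := L₁.map_h₀
  map_k₀ := L₁.map_k₀
  map_g₀ := by
    rw [P.map_comp, P.map_comp, L₁.map_g₀, L₂.map_g₀, eqToHom_map, ← hgf]
    simp
  map_h₀' := L₂.map_h₀'
  map_k₀' := L₂.map_k₀'
  comm := by
    calc L₁.h₀ ≫ L₁.k₀ ≫ L₁.g₀ ≫ eqToHom _ ≫ L₂.g₀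
        = L₁.g₀ ≫ L₁.h₀' ≫ L₁.k₀' ≫ eqToHom (c₀_eq_b₀ hmid) ≫ L₂.g₀ := by
          simp only [reassoc_of% L₁.comm]
      _ = L₁.g₀ ≫ eqToHom (c₀_eq_b₀ hmid) ≫ L₂.h₀ ≫ L₂.k₀ ≫ L₂.g₀ := by
          simp [h₀'_eq_h₀ hmid, k₀'_eq_k₀ hmid]
      _ = (L₁.g₀ ≫ eqToHom (c₀_eq_b₀ hmid) ≫ L₂.g₀) ≫ L₂.h₀' ≫ L₂.k₀' := by
          simp [L₂.comm]

end Consecutive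

/-- Lifts of the identity from a split `(h, k)` to a second split `(h₂, k₂)` of `b` and back
turn the lift `L₁.b₀` of the first split into a lift of the second. -/
abbrev retarget {g₁ g₂ : b ⟶ b} {h₂ : b ⟶ P.obj e'} {k₂ : P.obj e' ⟶ b}
    (hg₁ : g₁ = 𝟙 b) (hg₂ : g₂ = 𝟙 b)
    (L₁ : SplitLift P g₁ h k h₂ k₂) (L₂ : SplitLift P g₂ h₂ k₂ h k)
    (hmid : L₂.targetId = L₁.sourceId) : SplitLift P (𝟙 b) h₂ k₂ h₂ k₂ :=
  ofSplit rfl L₁.b₀ (L₁.g₀ ≫ L₁.h₀') (L₂.k₀ ≫ L₂.g₀ ≫ eqToHom (c₀_eq_b₀ hmid)) L₁.hb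
    (by subst hg₁; simp [L₁.map_g₀, L₁.map_h₀'])
    (by
      subst hg₂
      rw [P.map_comp, P.map_comp, eqToHom_map, L₂.map_k₀, L₂.map_g₀]
      simp)

end SplitLift

namespace IsDSB

variable {E B : Type u} [Category.{u} E] [Category.{u} B] {P : E ⥤ B} (hP : IsDSB P)
  {b c : B} {e e' : E} {g : b ⟶ c} {h : b ⟶ P.obj e} {k : P.obj e ⟶ b}
  {h' : c ⟶ P.obj e'} {k' : P.obj e' ⟶ c}
include hP

noncomputable def lift (hs : IsPSplit P e h k) (hs' : IsPSplit P e' h' k')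
    (hz : Zigzag (J := FactObj P g)
      ⟨e, h, k ≫ g, by rw [← Category.assoc, hs.1, Category.id_comp]⟩
      ⟨e', g ≫ h', k', by rw [Category.assoc, hs'.1, Category.comp_id]⟩) :
    SplitLift P g h k h' k' :=
  (hP g h k h' k' hs hs' hz).choose

theorem eq_lift (hs : IsPSplit P e h k) (hs' : IsPSplit P e' h' k') (hz)
    (L : SplitLift P g h k h' k') : L = hP.lift hs hs' hz :=
  (hP g h k h' k' hs hs' hz).choose_spec L

/-- The identity diagram of a split is trivially a `P`-split diagram. -/
theorem splitLift_id_ext (hs : IsPSplit P e h k) (L L' : SplitLift P (𝟙 b) h k h k) : L = L' := by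
  have hz : Zigzag (J := FactObj P (𝟙 b))
      ⟨e, h, k ≫ 𝟙 b, by rw [← Category.assoc, hs.1, Category.id_comp]⟩
      ⟨e, 𝟙 b ≫ h, k, by rw [Category.assoc, hs.1]; exact Category.comp_id _⟩ := by
    rw [FactObj.mk_eq_mk (Category.id_comp h).symm (Category.comp_id k)]
    simpa using hs.1
  exact (hP.eq_lift hs hs hz L).trans (hP.eq_lift hs hs hz L').symm

end IsDSB

section Square

variable {A B C D : Type u} [Category.{u} A] [Category.{u} B] [Category.{u} C] [Category.{u} D]
  {Q : A ⥤ B} {M : C ⥤ D} {G : A ⥤ C} {H : B ⥤ D} (hsq : Q ⋙ H = G ⋙ M) {b c : B}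

include hsq in
theorem square_obj (a : A) : H.obj (Q.obj a) = M.obj (G.obj a) := Functor.congr_obj hsq a

theorem square_map {a a' : A} (w : a ⟶ a') :
    M.map (G.map w) = eqToHom (square_obj hsq a).symm ≫ H.map (Q.map w) ≫
      eqToHom (square_obj hsq a') := by
  have hw := Functor.congr_hom hsq w
  simp only [Functor.comp_map] at hw
  simp [hw]

def FactObj.mapSquare {g : b ⟶ c} {b' c' : D} {g' : b' ⟶ c'} (eb : b' = H.obj b)
    (ec : H.obj c = c') (hg : g' = eqToHom eb ≫ H.map g ≫ eqToHom ec) :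
    FactObj Q g ⥤ FactObj M g' where
  obj p := ⟨G.obj p.pt,
    eqToHom eb ≫ H.map p.h ≫ eqToHom (square_obj hsq p.pt),
    eqToHom (square_obj hsq p.pt).symm ≫ H.map p.k ≫ eqToHom ec, by
      simp [hg, ← p.fac]⟩
  map {p q} u := ⟨G.map u.1, by
      simp [← u.2.1, square_map hsq], by
      simp [← u.2.2, square_map hsq]⟩
  map_id p := Subtype.ext (G.map_id p.pt)
  map_comp u v := Subtype.ext (G.map_comp u.1 v.1)

theorem FactObj.zigzag_mapSquare (hQ : Q.IsLaxEpi) {g : b ⟶ c} {b' c' : D} {g' : b' ⟶ c'}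
    (eb : b' = H.obj b) (ec : H.obj c = c') (hg : g' = eqToHom eb ≫ H.map g ≫ eqToHom ec)
    (p q : FactObj Q g) :
    Zigzag ((mapSquare hsq eb ec hg).obj p) ((mapSquare hsq eb ec hg).obj q) :=
  have := hQ.isConnected_factObj g
  zigzag_obj_of_zigzag _ (isPreconnected_zigzag p q)

def squareSplitH (p : FactObj Q (𝟙 b)) : H.obj b ⟶ M.obj (G.obj p.pt) :=
  H.map p.h ≫ eqToHom (square_obj hsq p.pt)

def squareSplitK (p : FactObj Q (𝟙 b)) : M.obj (G.obj p.pt) ⟶ H.obj b :=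
  eqToHom (square_obj hsq p.pt).symm ≫ H.map p.k

theorem isPSplit_square (hQ : Q.IsLaxEpi) (p : FactObj Q (𝟙 b)) :
    IsPSplit M (G.obj p.pt) (squareSplitH hsq p) (squareSplitK hsq p) := by
  have hpt := square_obj hsq p.pt
  refine ⟨by simp [squareSplitH, squareSplitK, ← H.map_comp, p.fac], ?_⟩
  have hg : squareSplitK hsq p ≫ squareSplitH hsq p =
      eqToHom hpt.symm ≫ H.map (p.k ≫ p.h) ≫ eqToHom hpt := by
    simp [squareSplitH, squareSplitK]
  convert FactObj.zigzag_mapSquare hsq hQ hpt.symm hpt hg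
    ⟨p.pt, 𝟙 _, p.k ≫ p.h, Category.id_comp _⟩ ⟨p.pt, p.k ≫ p.h, 𝟙 _, Category.comp_id _⟩
    using 2 <;> simp [FactObj.mapSquare, squareSplitH, squareSplitK]

theorem zigzag_square (hQ : Q.IsLaxEpi) (g : b ⟶ c) (p : FactObj Q (𝟙 b))
    (p' : FactObj Q (𝟙 c)) :
    Zigzag (J := FactObj M (H.map g))
      ⟨G.obj p.pt, squareSplitH hsq p, squareSplitK hsq p ≫ H.map g, by
        rw [← Category.assoc, (isPSplit_square hsq hQ p).1, Category.id_comp]⟩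
      ⟨G.obj p'.pt, H.map g ≫ squareSplitH hsq p', squareSplitK hsq p', by
        rw [Category.assoc, (isPSplit_square hsq hQ p').1, Category.comp_id]⟩ := by
  convert FactObj.zigzag_mapSquare hsq hQ rfl rfl
      (show H.map g = eqToHom rfl ≫ H.map g ≫ eqToHom rfl by simp)
    ⟨p.pt, p.h, p.k ≫ g, by rw [← Category.assoc, p.fac, Category.id_comp]⟩
    ⟨p'.pt, g ≫ p'.h, p'.k, by rw [Category.assoc, p'.fac, Category.comp_id]⟩
    using 2 <;> simp [FactObj.mapSquare, squareSplitH, squareSplitK]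

end Square

section Diagonal

variable {A B C D : Type u} [Category.{u} A] [Category.{u} B] [Category.{u} C] [Category.{u} D]
  {Q : A ⥤ B} {M : C ⥤ D} {G : A ⥤ C} {H : B ⥤ D}
  (hQ : Q.IsLaxEpi) (hM : IsDSB M) (hsq : Q ⋙ H = G ⋙ M) {b c : B}

noncomputable def squareLift (g : b ⟶ c) (p : FactObj Q (𝟙 b)) (p' : FactObj Q (𝟙 c)) :
    SplitLift M (H.map g) (squareSplitH hsq p) (squareSplitK hsq p)
      (squareSplitH hsq p') (squareSplitK hsq p') :=
  hM.lift (isPSplit_square hsq hQ p) (isPSplit_square hsq hQ p') (zigzag_square hsq hQ g p p')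

theorem eq_squareLift {g : b ⟶ c} {p : FactObj Q (𝟙 b)} {p' : FactObj Q (𝟙 c)}
    (L : SplitLift M (H.map g) (squareSplitH hsq p) (squareSplitK hsq p)
      (squareSplitH hsq p') (squareSplitK hsq p')) :
    L = squareLift hQ hM hsq g p p' :=
  hM.eq_lift _ _ _ L

include hQ hM in
theorem splitLift_square_ext {p : FactObj Q (𝟙 b)}
    (L L' : SplitLift M (𝟙 (H.obj b)) (squareSplitH hsq p) (squareSplitK hsq p)
      (squareSplitH hsq p) (squareSplitK hsq p)) : L = L' :=
  hM.splitLift_id_ext (isPSplit_square hsq hQ p) L L'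

variable (Q) in
abbrev pointSplit (a : A) : FactObj Q (𝟙 (Q.obj a)) := ⟨a, 𝟙 _, 𝟙 _, Category.id_comp _⟩

abbrev pointLift (a : A) :
    SplitLift M (𝟙 (H.obj (Q.obj a))) (squareSplitH hsq (pointSplit Q a))
      (squareSplitK hsq (pointSplit Q a)) (squareSplitH hsq (pointSplit Q a))
      (squareSplitK hsq (pointSplit Q a)) :=
  .ofSplit rfl (G.obj a) (𝟙 _) (𝟙 _) (square_obj hsq a).symm
    (by simp [squareSplitH, pointSplit]) (by simp [squareSplitK, pointSplit])

abbrev pointMapLift {a a' : A} (w : a ⟶ a') :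
    SplitLift M (H.map (Q.map w)) (squareSplitH hsq (pointSplit Q a))
      (squareSplitK hsq (pointSplit Q a)) (squareSplitH hsq (pointSplit Q a'))
      (squareSplitK hsq (pointSplit Q a')) where
  b₀ := G.obj a
  c₀ := G.obj a'
  h₀ := 𝟙 _
  k₀ := 𝟙 _
  g₀ := G.map w
  h₀' := 𝟙 _
  k₀' := 𝟙 _
  hb := (square_obj hsq a).symm
  hc := (square_obj hsq a').symm
  map_h₀ := by simp [squareSplitH, pointSplit]
  map_k₀ := by simp [squareSplitK, pointSplit]
  map_g₀ := square_map hsq w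
  map_h₀' := by simp [squareSplitH, pointSplit]
  map_k₀' := by simp [squareSplitK, pointSplit]
  comm := by simp

noncomputable def chosenSplit (b : B) : FactObj Q (𝟙 b) :=
  (hQ.isConnected_factObj (𝟙 b)).is_nonempty.some

noncomputable abbrev diagonalLift (g : b ⟶ c) :=
  squareLift hQ hM hsq g (chosenSplit hQ b) (chosenSplit hQ c)

theorem diagonalLift_b₀ (g : b ⟶ c) :
    (diagonalLift hQ hM hsq g).b₀ = (diagonalLift hQ hM hsq (𝟙 b)).b₀ :=
  SplitLift.congr_b₀ (splitLift_square_ext hQ hM hsq (diagonalLift hQ hM hsq g).sourceId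
    (diagonalLift hQ hM hsq (𝟙 b)).sourceId)

theorem diagonalLift_c₀ (g : b ⟶ c) :
    (diagonalLift hQ hM hsq g).c₀ = (diagonalLift hQ hM hsq (𝟙 c)).b₀ :=
  SplitLift.c₀_eq_b₀ (splitLift_square_ext hQ hM hsq (diagonalLift hQ hM hsq g).targetId
    (diagonalLift hQ hM hsq (𝟙 c)).sourceId)

noncomputable def diagonal : B ⥤ C where
  obj b := (diagonalLift hQ hM hsq (𝟙 b)).b₀
  map g := eqToHom (diagonalLift_b₀ hQ hM hsq g).symm ≫ (diagonalLift hQ hM hsq g).g₀ ≫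
    eqToHom (diagonalLift_c₀ hQ hM hsq g)
  map_id b := by
    let L := diagonalLift hQ hM hsq (𝟙 b)
    have hL := eq_squareLift hQ hM hsq
      (SplitLift.ofSplit (H.map_id b) L.b₀ L.h₀ L.k₀ L.hb L.map_h₀ L.map_k₀)
    simp [SplitLift.congr_g₀ hL.symm]
  map_comp {b c d} g f := by
    have hL := eq_squareLift hQ hM hsq ((diagonalLift hQ hM hsq g).comp
      (splitLift_square_ext hQ hM hsq _ (diagonalLift hQ hM hsq f).sourceId) (H.map_comp g f).symm)
    simp [SplitLift.congr_g₀ hL.symm]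

theorem diagonal_comp : diagonal hQ hM hsq ⋙ M = H :=
  Functor.ext (fun b => (diagonalLift hQ hM hsq (𝟙 b)).hb) fun b c g => by
    simp only [Functor.comp_map, diagonal, M.map_comp, eqToHom_map,
      (diagonalLift hQ hM hsq g).map_g₀]
    simp

noncomputable abbrev toPointLift (a : A) :=
  squareLift hQ hM hsq (𝟙 (Q.obj a)) (chosenSplit hQ (Q.obj a)) (pointSplit Q a)

noncomputable abbrev fromPointLift (a : A) :=
  squareLift hQ hM hsq (𝟙 (Q.obj a)) (pointSplit Q a) (chosenSplit hQ (Q.obj a))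

/-- The split induced by `pointSplit Q a` has only the lift `G a`; this pins down
`diagonal.obj (Q a)` and the comparison lifts. -/
theorem retarget_eq_pointLift (a : A) :
    SplitLift.retarget (H.map_id _) (H.map_id _) (toPointLift hQ hM hsq a)
      (fromPointLift hQ hM hsq a) (splitLift_square_ext hQ hM hsq _ _) = pointLift hsq a :=
  splitLift_square_ext hQ hM hsq _ _

theorem toPointLift_b₀ (a : A) : (toPointLift hQ hM hsq a).b₀ = G.obj a :=
  SplitLift.congr_b₀ (retarget_eq_pointLift hQ hM hsq a)

theorem toPointLift_c₀ (a : A) : (toPointLift hQ hM hsq a).c₀ = G.obj a :=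
  SplitLift.congr_b₀ (splitLift_square_ext hQ hM hsq (toPointLift hQ hM hsq a).targetId
    (pointLift hsq a))

theorem toPointLift_g₀ (a : A) :
    (toPointLift hQ hM hsq a).g₀ =
      eqToHom ((toPointLift_b₀ hQ hM hsq a).trans (toPointLift_c₀ hQ hM hsq a).symm) := by
  have hg : (toPointLift hQ hM hsq a).g₀ ≫ (toPointLift hQ hM hsq a).h₀' =
      eqToHom (toPointLift_b₀ hQ hM hsq a) ≫ 𝟙 _ :=
    SplitLift.congr_h₀ (retarget_eq_pointLift hQ hM hsq a)
  have hh : (toPointLift hQ hM hsq a).h₀' = eqToHom (toPointLift_c₀ hQ hM hsq a) ≫ 𝟙 _ :=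
    SplitLift.congr_h₀ (splitLift_square_ext hQ hM hsq (toPointLift hQ hM hsq a).targetId
      (pointLift hsq a))
  rw [hh] at hg
  simpa [comp_eqToHom_iff] using hg

theorem fromPointLift_b₀ (a : A) : (fromPointLift hQ hM hsq a).b₀ = G.obj a :=
  SplitLift.congr_b₀ (splitLift_square_ext hQ hM hsq (fromPointLift hQ hM hsq a).sourceId
    (pointLift hsq a))

theorem fromPointLift_c₀ (a : A) :
    (fromPointLift hQ hM hsq a).c₀ = (toPointLift hQ hM hsq a).b₀ :=
  SplitLift.c₀_eq_b₀ (splitLift_square_ext hQ hM hsq (fromPointLift hQ hM hsq a).targetId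
    (toPointLift hQ hM hsq a).sourceId)

theorem fromPointLift_g₀ (a : A) :
    (fromPointLift hQ hM hsq a).g₀ = eqToHom ((fromPointLift_b₀ hQ hM hsq a).trans
      ((toPointLift_b₀ hQ hM hsq a).symm.trans (fromPointLift_c₀ hQ hM hsq a).symm)) := by
  have hg : (fromPointLift hQ hM hsq a).k₀ ≫ (fromPointLift hQ hM hsq a).g₀ ≫
      eqToHom (fromPointLift_c₀ hQ hM hsq a) = 𝟙 _ ≫ eqToHom (toPointLift_b₀ hQ hM hsq a).symm :=
    SplitLift.congr_k₀ (retarget_eq_pointLift hQ hM hsq a)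
  have hk : (fromPointLift hQ hM hsq a).k₀ = 𝟙 _ ≫ eqToHom (fromPointLift_b₀ hQ hM hsq a).symm :=
    SplitLift.congr_k₀ (splitLift_square_ext hQ hM hsq (fromPointLift hQ hM hsq a).sourceId
      (pointLift hsq a))
  rw [hk] at hg
  simpa [eqToHom_comp_iff, comp_eqToHom_iff] using hg

theorem diagonal_obj_map (a : A) : (diagonal hQ hM hsq).obj (Q.obj a) = G.obj a :=
  (SplitLift.congr_b₀ (splitLift_square_ext hQ hM hsq
    (diagonalLift hQ hM hsq (𝟙 (Q.obj a))).sourceId (toPointLift hQ hM hsq a).sourceId)).trans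
    (toPointLift_b₀ hQ hM hsq a)

theorem diagonal_map_map {a a' : A} (w : a ⟶ a') :
    (diagonal hQ hM hsq).map (Q.map w) = eqToHom (diagonal_obj_map hQ hM hsq a) ≫ G.map w ≫
      eqToHom (diagonal_obj_map hQ hM hsq a').symm := by
  have hL := eq_squareLift hQ hM hsq
    (((toPointLift hQ hM hsq a).comp
      (splitLift_square_ext hQ hM hsq _ (pointMapLift hsq w).sourceId)
      (by simp : H.map (𝟙 _) ≫ H.map (Q.map w) = H.map (Q.map w))).comp
      (splitLift_square_ext hQ hM hsq _ (fromPointLift hQ hM hsq a').sourceId)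
      (by simp : H.map (Q.map w) ≫ H.map (𝟙 _) = H.map (Q.map w)))
  simp [diagonal, SplitLift.congr_g₀ hL.symm, toPointLift_g₀, fromPointLift_g₀]

theorem comp_diagonal : Q ⋙ diagonal hQ hM hsq = G :=
  Functor.ext (diagonal_obj_map hQ hM hsq) fun _ _ w => diagonal_map_map hQ hM hsq w

abbrev liftOfDiagonal (T : B ⥤ C) (hTQ : Q ⋙ T = G) (hTM : T ⋙ M = H) (g : b ⟶ c)
    (p : FactObj Q (𝟙 b)) (p' : FactObj Q (𝟙 c)) :
    SplitLift M (H.map g) (squareSplitH hsq p) (squareSplitK hsq p)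
      (squareSplitH hsq p') (squareSplitK hsq p') where
  b₀ := T.obj b
  c₀ := T.obj c
  h₀ := T.map p.h ≫ eqToHom (Functor.congr_obj hTQ p.pt)
  k₀ := eqToHom (Functor.congr_obj hTQ p.pt).symm ≫ T.map p.k
  g₀ := T.map g
  h₀' := T.map p'.h ≫ eqToHom (Functor.congr_obj hTQ p'.pt)
  k₀' := eqToHom (Functor.congr_obj hTQ p'.pt).symm ≫ T.map p'.k
  hb := Functor.congr_obj hTM b
  hc := Functor.congr_obj hTM c
  map_h₀ := by
    simp only [Functor.map_comp, eqToHom_map]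
    simp [squareSplitH, Functor.congr_hom hTM.symm p.h]
  map_k₀ := by
    simp only [Functor.map_comp, eqToHom_map]
    simp [squareSplitK, Functor.congr_hom hTM.symm p.k]
  map_g₀ := by simp [Functor.congr_hom hTM.symm g]
  map_h₀' := by
    simp only [Functor.map_comp, eqToHom_map]
    simp [squareSplitH, Functor.congr_hom hTM.symm p'.h]
  map_k₀' := by
    simp only [Functor.map_comp, eqToHom_map]
    simp [squareSplitK, Functor.congr_hom hTM.symm p'.k]
  comm := by
    simp only [Category.assoc, eqToHom_trans_assoc, eqToHom_refl, Category.id_comp,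
      ← T.map_comp]
    simp [reassoc_of% p.fac, p'.fac]

theorem diagonal_map_heq (g : b ⟶ c) :
    (diagonal hQ hM hsq).map g ≍ (diagonalLift hQ hM hsq g).g₀ :=
  (conj_eqToHom_iff_heq' _ _ _ _).1 rfl

theorem eq_diagonal (T : B ⥤ C) (hTQ : Q ⋙ T = G) (hTM : T ⋙ M = H) :
    T = diagonal hQ hM hsq :=
  Functor.hext
    (fun b => SplitLift.congr_b₀ (eq_squareLift hQ hM hsq
      (liftOfDiagonal hsq T hTQ hTM (𝟙 b) (chosenSplit hQ b) (chosenSplit hQ b))))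
    fun b c g => (SplitLift.heq_g₀ (eq_squareLift hQ hM hsq
      (liftOfDiagonal hsq T hTQ hTM g (chosenSplit hQ b) (chosenSplit hQ c)))).trans
      (diagonal_map_heq hQ hM hsq g).symm

end Diagonal

end CategoryTheory

open CategoryTheory in
/-- Diagonal fill-in: given a lax epimorphism `Q : A ⥤ B` and a discrete splitting
bifibration `M : C ⥤ D` between small categories, any commutative square `Q ⋙ H = G ⋙ M`
admits a unique diagonal `T : B ⥤ C` with `Q ⋙ T = G` and `T ⋙ M = H`. -/
theorem laxEpi_dsb_fillIn {A B C D : Type u}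
    [Category.{u} A] [Category.{u} B] [Category.{u} C] [Category.{u} D]
    (Q : A ⥤ B) (M : C ⥤ D) (hQ : Q.IsLaxEpi) (hM : IsDSB M)
    (G : A ⥤ C) (H : B ⥤ D) (hsq : Q ⋙ H = G ⋙ M) :
    ∃! T : B ⥤ C, Q ⋙ T = G ∧ T ⋙ M = H :=
  ⟨diagonal hQ hM hsq, ⟨comp_diagonal hQ hM hsq, diagonal_comp hQ hM hsq⟩,
    fun T ⟨hTQ, hTM⟩ => eq_diagonal hQ hM hsq T hTQ hTM⟩
end

section
/- For any functors F, G : A ⥤ B between categories, the projection functor Π : Ins(F, G) ⥤ A of the inserter category is a lax strong monomorphism: for every lax epimorphism Q : P ⥤ Q' and all functors X : P ⥤ Ins(F, G), Y : Q' ⥤ A with Q ⋙ Y = X ⋙ Π, there exists a unique functor T : Q' ⥤ Ins(F, G) with Q ⋙ T = X and T ⋙ Π = Y. -/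
open CategoryTheory

universe u

namespace CategoryTheory

variable {A B : Type u} [Category.{u} A] [Category.{u} B]

/-- Objects of the inserter category `Ins(F, G)`: pairs `(a, φ)` with `φ : F a ⟶ G a`. -/
structure Inserter (F G : A ⥤ B) where
  pt : A
  φ : F.obj pt ⟶ G.obj pt

/-- The inserter category of two functors `F G : A ⥤ B`. -/
instance Inserter.category (F G : A ⥤ B) : Category (Inserter F G) where
  Hom x y := { u : x.pt ⟶ y.pt // F.map u ≫ y.φ = x.φ ≫ G.map u }
  id x := ⟨𝟙 x.pt, by simp⟩
  comp {x y z} u v := ⟨u.1 ≫ v.1, by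
    rw [F.map_comp, G.map_comp, Category.assoc, v.2, ← Category.assoc, u.2, Category.assoc]⟩
  id_comp f := Subtype.ext (by simp)
  comp_id f := Subtype.ext (by simp)
  assoc f g h := Subtype.ext (by simp)

/-- The projection functor `Π : Ins(F, G) ⥤ A`. -/
def inserterProj (F G : A ⥤ B) : Inserter F G ⥤ A where
  obj x := x.pt
  map u := u.1
  map_id _ := rfl
  map_comp _ _ := rfl

/-!
A functor `T` into `Ins(F, G)` with `T ⋙ Π = Y` is the same thing as a natural transformation
`β : Y ⋙ F ⟶ Y ⋙ G` (its components are the second coordinates of the `T q`), and precomposing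
`T` with `Q` corresponds to whiskering `β` with `Q`. A diagonal filler is therefore a `β` whose
whiskering with `Q` is the transformation carried by `X`: fullness of `Q ⋙ -` gives one,
faithfulness makes it unique.
-/

namespace Inserter

variable {C D : Type*} [Category C] [Category D] {F G : A ⥤ B}

def cell (F G : A ⥤ B) : inserterProj F G ⋙ F ⟶ inserterProj F G ⋙ G where
  app x := x.φ
  naturality _ _ u := u.2

def lift (Y : C ⥤ A) (β : Y ⋙ F ⟶ Y ⋙ G) : C ⥤ Inserter F G where
  obj c := ⟨Y.obj c, β.app c⟩
  map f := ⟨Y.map f, β.naturality f⟩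
  map_id _ := Subtype.ext (Y.map_id _)
  map_comp _ _ := Subtype.ext (Y.map_comp _ _)

theorem lift_comp_inserterProj (Y : C ⥤ A) (β : Y ⋙ F ⟶ Y ⋙ G) :
    lift Y β ⋙ inserterProj F G = Y :=
  rfl

theorem comp_lift (K : D ⥤ C) (Y : C ⥤ A) (β : Y ⋙ F ⟶ Y ⋙ G) :
    K ⋙ lift Y β = lift (K ⋙ Y) (Functor.whiskerLeft K β) :=
  rfl

theorem lift_injective {Y : C ⥤ A} {β β' : Y ⋙ F ⟶ Y ⋙ G} (h : lift Y β = lift Y β') :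
    β = β' := by
  ext c
  have := Functor.congr_obj h c
  simp only [lift, mk.injEq, heq_eq_eq, true_and] at this
  exact this

theorem exists_eq_lift {T : C ⥤ Inserter F G} {Y : C ⥤ A} (hT : T ⋙ inserterProj F G = Y) :
    ∃ β : Y ⋙ F ⟶ Y ⋙ G, T = lift Y β := by
  subst hT
  exact ⟨Functor.whiskerLeft T (cell F G), rfl⟩

end Inserter

open Inserter in
/-- The projection of an inserter category is a lax strong monomorphism: it has the unique
diagonal fill-in property with respect to all lax epimorphisms. -/
theorem inserterProj_laxStrongMono (F G : A ⥤ B) :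
    ∀ (P Q' : Type u) [Category.{u} P] [Category.{u} Q'] (Q : P ⥤ Q'), Q.IsLaxEpi →
      ∀ (X : P ⥤ Inserter F G) (Y : Q' ⥤ A), Q ⋙ Y = X ⋙ inserterProj F G →
        ∃! T : Q' ⥤ Inserter F G, Q ⋙ T = X ∧ T ⋙ inserterProj F G = Y := by
  intro P Q' _ _ Q hQ X Y h
  obtain ⟨hfull, hfaithful⟩ := hQ B
  obtain ⟨γ, rfl⟩ := exists_eq_lift h.symm
  obtain ⟨β, hβ⟩ := hfull.map_surjective (X := Y ⋙ F) (Y := Y ⋙ G) γ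
  replace hβ : Functor.whiskerLeft Q β = γ := hβ
  refine ⟨lift Y β, ⟨by rw [comp_lift, hβ], lift_comp_inserterProj Y β⟩, ?_⟩
  rintro T ⟨hQT, hYT⟩
  obtain ⟨β', rfl⟩ := exists_eq_lift hYT
  rw [comp_lift, ← hβ] at hQT
  have hβ' : Functor.whiskerLeft Q β' = Functor.whiskerLeft Q β :=
    lift_injective (F := F) (G := G) hQT
  rw [hfaithful.map_injective (X := Y ⋙ F) (Y := Y ⋙ G) hβ']

end CategoryTheory
end

section
/- Every lax strong monomorphism in Cat is faithful: if M : C ⥤ D is a functor such that for every lax epimorphism Q : A ⥤ B and all functors G : A ⥤ C, H : B ⥤ D with Q ⋙ H = G ⋙ M there exists a unique functor T : B ⥤ C with Q ⋙ T = G and T ⋙ M = H, then M is a faithful functor. -/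
/-!
Factor `M` through the quotient of `C` by its kernel congruence `M.homRel`. Quotient functors
are lax epimorphisms, so the fill-in property provides a retraction of the quotient functor
`C ⥤ Quotient M.homRel`. The quotient functor is then faithful, i.e. `M` identifies no two
distinct parallel morphisms.
-/

open CategoryTheory

universe u

namespace CategoryTheory

theorem Quotient.functor_isLaxEpi {C : Type u} [Category.{u} C] (r : HomRel C) :
    (Quotient.functor r).IsLaxEpi :=
  fun _ _ => ⟨inferInstance, inferInstance⟩

theorem Functor.Faithful.of_faithful_quotientFunctor_homRel {C D : Type*} [Category* C]
    [Category* D] (M : C ⥤ D) [(Quotient.functor M.homRel).Faithful] : M.Faithful :=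
  ⟨fun h => (Quotient.functor M.homRel).map_injective ((Quotient.functor_map_eq_iff _ _ _).mpr h)⟩

/-- Every lax strong monomorphism in `Cat` is faithful: if `M : C ⥤ D` has the unique
diagonal fill-in property with respect to all lax epimorphisms, then `M` is faithful. -/
theorem laxStrongMono_faithful {C D : Type u} [Category.{u} C] [Category.{u} D] (M : C ⥤ D)
    (hM : ∀ (A B : Type u) [Category.{u} A] [Category.{u} B] (Q : A ⥤ B), Q.IsLaxEpi →
      ∀ (G : A ⥤ C) (H : B ⥤ D), Q ⋙ H = G ⋙ M →
        ∃! T : B ⥤ C, Q ⋙ T = G ∧ T ⋙ M = H) :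
    M.Faithful := by
  obtain ⟨T, ⟨hT, -⟩, -⟩ := hM C (Quotient M.homRel) (Quotient.functor M.homRel)
    (Quotient.functor_isLaxEpi _) (𝟭 C) (Quotient.lift _ M fun _ _ _ _ => id)
    ((Quotient.lift_spec _ _ _).trans (Functor.id_comp M).symm)
  have : (Quotient.functor M.homRel).Faithful := Functor.Faithful.of_comp_eq hT
  exact Functor.Faithful.of_faithful_quotientFunctor_homRel M

end CategoryTheory
end

section
/- A functor F : A ⥤ B between small categories is a lax epimorphism if and only if for every morphism g : b ⟶ c of B, the factorization category g↓↓F is connected (nonempty, and any two objects are joined by a finite zigzag of morphisms). -/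
open CategoryTheory

universe u

/-!
A natural transformation `γ : F ⋙ G ⟶ F ⋙ H` assigns to a factorization `b ⟶ F a ⟶ c` of
`g : b ⟶ c` the morphism `G b ⟶ G (F a) ⟶ H (F a) ⟶ H c`, and naturality of `γ` makes it constant
along the morphisms of `g ↓↓ F`. If every `g ↓↓ F` is connected, the constant value for `g = 𝟙 x`
is the component at `x` of the unique extension of `γ` to `G ⟶ H`.

Conversely, fix `b` and let `W c` be the set of connected components of all factorizations
`b ⟶ F a ⟶ c`, of arbitrary morphisms `b ⟶ c`. Composing the factorization is a natural map
`W ⟶ B(b, -)`, and on the image of `F` it has the section `h ↦ [(a, h, 𝟙)]`. For a lax epimorphism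
this section extends to a natural transformation `α : B(b, -) ⟶ W`, still a section by
faithfulness, and naturality of `α` forces every factorization of `g` into the component `α g`.
-/

open CategoryTheory Functor Opposite

namespace CategoryTheory

variable {A B : Type u} [Category.{u} A] [Category.{u} B] {F : A ⥤ B}

/-- `P` and `Q` factor through the full subcategory of `D` on their values, which is small. -/
theorem Functor.IsLaxEpi.whiskerLeft_bijective_s17 (hF : F.IsLaxEpi) {D : Type*} [Category.{u} D]
    (P Q : B ⥤ D) : Function.Bijective (whiskerLeft F : (P ⟶ Q) → (F ⋙ P ⟶ F ⋙ Q)) := by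
  let C := InducedCategory D (Sum.elim P.obj Q.obj)
  let P' : B ⥤ C := { obj := Sum.inl, map f := InducedCategory.homMk (P.map f) }
  let Q' : B ⥤ C := { obj := Sum.inr, map f := InducedCategory.homMk (Q.map f) }
  let ι := fullyFaithfulInducedFunctor (Sum.elim P.obj Q.obj)
  obtain ⟨_, _⟩ := hF C
  have hlax := (FullyFaithful.ofFullyFaithful ((whiskeringLeft A B C).obj F)).map_bijective P' Q'
  exact (Function.Bijective.of_comp_iff (whiskerLeft F : (P ⟶ Q) → (F ⋙ P ⟶ F ⋙ Q))
    ((ι.whiskeringRight B).map_bijective P' Q')).1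
    (((ι.whiskeringRight A).map_bijective _ _).comp hlax)

namespace FactObj

variable {b b' c c' : B} {g : b ⟶ c}

def precomp (f : b' ⟶ b) (x : FactObj F g) : FactObj F (f ≫ g) :=
  ⟨x.pt, f ≫ x.h, x.k, by rw [Category.assoc, x.fac]⟩

def postcomp (x : FactObj F g) (f : c ⟶ c') : FactObj F (g ≫ f) :=
  ⟨x.pt, x.h, x.k ≫ f, by rw [← Category.assoc, x.fac]⟩

section Value

variable {C : Type*} [Category C] {G H : B ⥤ C} (γ : F ⋙ G ⟶ F ⋙ H)

def value (x : FactObj F g) : G.obj b ⟶ H.obj c :=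
  G.map x.h ≫ γ.app x.pt ≫ H.map x.k

theorem value_eq_of_hom {x y : FactObj F g} (u : x ⟶ y) : x.value γ = y.value γ := by
  obtain ⟨u, hh, hk⟩ := u
  have hγ : G.map (F.map u) ≫ γ.app y.pt = γ.app x.pt ≫ H.map (F.map u) := γ.naturality u
  simp only [value, ← hh, ← hk, Functor.map_comp, Category.assoc, reassoc_of% hγ]

theorem value_precomp (f : b' ⟶ b) (x : FactObj F g) :
    (x.precomp f).value γ = G.map f ≫ x.value γ := by
  simp [value, precomp]

theorem value_postcomp (x : FactObj F g) (f : c ⟶ c') :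
    (x.postcomp f).value γ = x.value γ ≫ H.map f := by
  simp [value, postcomp]

theorem value_whiskerLeft (τ : G ⟶ H) (x : FactObj F g) :
    x.value (whiskerLeft F τ) = τ.app b ≫ H.map g := by
  simp [value, ← x.fac]

theorem value_mk_id_id (a : A) :
    (⟨a, 𝟙 _, 𝟙 _, Category.id_comp _⟩ : FactObj F (𝟙 (F.obj a))).value γ = γ.app a := by
  simp [value]

end Value

end FactObj

section Connected

variable (hF : ∀ {b c : B} (g : b ⟶ c), IsConnected (FactObj F g)) {C : Type*} [Category C]
include hF

theorem FactObj.value_congr {G H : B ⥤ C} (γ : F ⋙ G ⟶ F ⋙ H) {b c : B} {g g' : b ⟶ c}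
    (hg : g = g') (x : FactObj F g) (y : FactObj F g') : x.value γ = y.value γ := by
  subst hg
  have := hF g
  exact constant_of_preserves_morphisms (·.value γ) (fun _ _ u => value_eq_of_hom γ u) x y

noncomputable def liftOfIsConnected {G H : B ⥤ C} (γ : F ⋙ G ⟶ F ⋙ H) : G ⟶ H where
  app x := (hF (𝟙 x)).is_nonempty.some.value γ
  naturality x y f := by
    rw [← FactObj.value_precomp, ← FactObj.value_postcomp]
    exact FactObj.value_congr hF γ (by simp) _ _

variable (C) in
noncomputable def fullyFaithfulWhiskeringLeftOfIsConnected :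
    ((whiskeringLeft A B C).obj F).FullyFaithful where
  preimage γ := liftOfIsConnected hF γ
  map_preimage γ := by
    ext a
    exact (FactObj.value_congr hF γ rfl _ _).trans (FactObj.value_mk_id_id γ a)
  preimage_map τ := by
    ext x
    exact (FactObj.value_whiskerLeft τ _).trans (by simp)

end Connected

variable (F) in
structure FactWedge (b c : B) where
  pt : A
  h : b ⟶ F.obj pt
  k : F.obj pt ⟶ c

namespace FactWedge

variable {b c c' : B}

def Rel (w w' : FactWedge F b c) : Prop :=
  ∃ u : w.pt ⟶ w'.pt, w.h ≫ F.map u = w'.h ∧ F.map u ≫ w'.k = w.k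

def comp (w : FactWedge F b c) : b ⟶ c := w.h ≫ w.k

def postcomp (w : FactWedge F b c) (f : c ⟶ c') : FactWedge F b c' := ⟨w.pt, w.h, w.k ≫ f⟩

theorem postcomp_id (w : FactWedge F b c) : w.postcomp (𝟙 c) = w := by
  simp [postcomp]

theorem postcomp_comp {c'' : B} (w : FactWedge F b c) (f : c ⟶ c') (f' : c' ⟶ c'') :
    w.postcomp (f ≫ f') = (w.postcomp f).postcomp f' := by
  simp [postcomp]

theorem comp_postcomp (w : FactWedge F b c) (f : c ⟶ c') : (w.postcomp f).comp = w.comp ≫ f :=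
  (Category.assoc _ _ _).symm

def toFactObj (w : FactWedge F b c) {g : b ⟶ c} (hw : w.comp = g) : FactObj F g :=
  ⟨w.pt, w.h, w.k, hw⟩

theorem comp_eq_of_rel {w w' : FactWedge F b c} (r : Rel w w') : w.comp = w'.comp := by
  obtain ⟨u, hh, hk⟩ := r
  simp only [comp, ← hh, ← hk, Category.assoc]

theorem comp_eq_of_eqvGen {w w' : FactWedge F b c} (h : Relation.EqvGen Rel w w') :
    w.comp = w'.comp :=
  congrArg (Quot.lift comp fun _ _ => comp_eq_of_rel) (Quot.eqvGen_sound h)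

theorem rel_postcomp {w w' : FactWedge F b c} (r : Rel w w') (f : c ⟶ c') :
    Rel (w.postcomp f) (w'.postcomp f) := by
  obtain ⟨u, hh, hk⟩ := r
  exact ⟨u, hh, by simp only [postcomp, ← hk, Category.assoc]⟩

theorem zigzag_toFactObj_of_eqvGen {g : b ⟶ c} {w w' : FactWedge F b c}
    (h : Relation.EqvGen Rel w w') (hw : w.comp = g) (hw' : w'.comp = g) :
    Zigzag (w.toFactObj hw) (w'.toFactObj hw') := by
  induction h with
  | rel _ _ r =>
    obtain ⟨u, hu⟩ := r
    exact Zigzag.of_hom ⟨u, hu⟩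
  | refl => exact Zigzag.refl _
  | symm _ _ _ ih => exact (ih hw' hw).symm
  | trans _ w₂ _ h₁₂ _ ih₁₂ ih₂₃ =>
    have hw₂ : w₂.comp = g := (comp_eq_of_eqvGen h₁₂).symm.trans hw
    exact (ih₁₂ hw hw₂).trans (ih₂₃ hw₂ hw')

end FactWedge

def FactObj.toFactWedge {b c : B} {g : b ⟶ c} (x : FactObj F g) : FactWedge F b c :=
  ⟨x.pt, x.h, x.k⟩

variable (F) in
def wedgeComponents (b : B) : B ⥤ Type u where
  obj c := Quot (FactWedge.Rel (F := F) (b := b) (c := c))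
  map f := ↾Quot.map (fun w : FactWedge F b _ => w.postcomp f) fun _ _ r =>
    FactWedge.rel_postcomp r f
  map_id c := by
    ext ⟨w⟩
    exact congrArg (Quot.mk _) w.postcomp_id
  map_comp f f' := by
    ext ⟨w⟩
    exact congrArg (Quot.mk _) (w.postcomp_comp f f')

namespace wedgeComponents

variable (F) (b : B)

def toCoyoneda : wedgeComponents F b ⟶ coyoneda.obj (op b) where
  app c := ↾Quot.lift FactWedge.comp fun _ _ => FactWedge.comp_eq_of_rel
  naturality c c' f := by
    ext ⟨w⟩
    exact w.comp_postcomp f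

def ofCoyoneda : F ⋙ coyoneda.obj (op b) ⟶ F ⋙ wedgeComponents F b where
  app a := ↾fun h => Quot.mk _ ⟨a, h, 𝟙 _⟩
  naturality a a' u := by
    ext h
    exact (Quot.sound ⟨u, rfl, by simp [FactWedge.postcomp]⟩).symm

theorem ofCoyoneda_comp_whiskerLeft_toCoyoneda :
    ofCoyoneda F b ≫ whiskerLeft F (toCoyoneda F b) = 𝟙 _ := by
  ext a h
  exact Category.comp_id h

variable {F b}

theorem app_comp_eq_mk {α : coyoneda.obj (op b) ⟶ wedgeComponents F b}
    (hα : whiskerLeft F α = ofCoyoneda F b) {c : B} (w : FactWedge F b c) :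
    α.app c w.comp = Quot.mk _ w := by
  have hnat : α.app c (w.h ≫ w.k) = (wedgeComponents F b).map w.k (α.app (F.obj w.pt) w.h) :=
    congrArg (fun φ => φ w.h) (α.naturality w.k)
  have hσ : α.app (F.obj w.pt) w.h = Quot.mk _ ⟨w.pt, w.h, 𝟙 _⟩ :=
    congrArg (fun φ => φ.app w.pt w.h) hα
  rw [FactWedge.comp, hnat, hσ]
  exact congrArg (Quot.mk _) (by simp [FactWedge.postcomp])

end wedgeComponents

theorem isConnected_factObj_of_whiskerLeft_eq_ofCoyoneda {b : B}
    {α : coyoneda.obj (op b) ⟶ wedgeComponents F b}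
    (hα : whiskerLeft F α = wedgeComponents.ofCoyoneda F b)
    (hsection : α ≫ wedgeComponents.toCoyoneda F b = 𝟙 _) {c : B} (g : b ⟶ c) :
    IsConnected (FactObj F g) := by
  obtain ⟨w, hw⟩ := Quot.exists_rep (α.app c g)
  have hwg : w.comp = g := by
    have h := congrArg (fun φ => φ.app c g) hsection
    rw [NatTrans.comp_app, types_comp_apply, ← hw] at h
    exact h
  have : Nonempty (FactObj F g) := ⟨w.toFactObj hwg⟩
  have hmk (x : FactObj F g) : Quot.mk _ x.toFactWedge = α.app c g :=
    (wedgeComponents.app_comp_eq_mk hα _).symm.trans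
      (congrArg (α.app c) (x.fac : x.toFactWedge.comp = g))
  exact zigzag_isConnected fun x y => FactWedge.zigzag_toFactObj_of_eqvGen
    (Quot.eqvGen_exact ((hmk x).trans (hmk y).symm)) x.fac y.fac

end CategoryTheory

open CategoryTheory in
/-- A functor `F : A ⥤ B` between small categories is a lax epimorphism if and only if, for
every morphism `g` of `B`, the factorization category `g ↓↓ F` is connected. -/
theorem isLaxEpi_iff_factObj_connected {A B : Type u} [Category.{u} A] [Category.{u} B]
    (F : A ⥤ B) :
    F.IsLaxEpi ↔ ∀ {b c : B} (g : b ⟶ c), IsConnected (FactObj F g) := by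
  refine ⟨fun hF b c g => ?_, fun hF C _ => ?_⟩
  · obtain ⟨α, hα⟩ := (hF.whiskerLeft_bijective_s17 _ _).2 (wedgeComponents.ofCoyoneda F b)
    refine isConnected_factObj_of_whiskerLeft_eq_ofCoyoneda hα
      ((hF.whiskerLeft_bijective_s17 _ _).1 ?_) g
    rw [whiskerLeft_comp, hα, whiskerLeft_id',
      wedgeComponents.ofCoyoneda_comp_whiskerLeft_toCoyoneda]
  · let e := fullyFaithfulWhiskeringLeftOfIsConnected hF C
    exact ⟨e.full, e.faithful⟩
end
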